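/- If ℱ is a regular family of finite subsets of ℕ and M = (m₁ < m₂ < ⋯) is an infinite subset of ℕ, then ℱ(M⁻¹) := {E finite : (m_n)_{n∈E} ∈ ℱ} is regular and has the same Cantor–Bendixson index as ℱ. -/

import Mathlib

/-- Identify a finite subset of `ℕ` with a point of the Cantor space `ℕ → Bool`. -/
def toCantor (F : Finset ℕ) : ℕ → Bool := fun n => decide (n ∈ F)

/-- Hereditary: closed under subsets. -/
def Hereditary (G : Set (Finset ℕ)) : Prop := ∀ ⦃E F : Finset ℕ⦄, E ⊆ F → F ∈ G → E ∈ G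

/-- Spreading: closed under replacing elements by larger ones, keeping the
increasing order and the cardinality. -/
def Spreading (G : Set (Finset ℕ)) : Prop :=
  ∀ (E : Finset ℕ) (f : ℕ → ℕ), StrictMonoOn f ↑E → (∀ n ∈ E, n ≤ f n) →
    E ∈ G → E.image f ∈ G

/-- Regular: compact (in the Cantor topology), hereditary and spreading. -/
def IsRegularFam (G : Set (Finset ℕ)) : Prop :=
  IsCompact (toCantor '' G) ∧ Hereditary G ∧ Spreading G

/-- The Cantor–Bendixson derivative. -/
def cbDeriv {α : Type*} [TopologicalSpace α] (K : Set α) : Set α :=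
  {x | x ∈ K ∧ x ∈ closure (K \ {x})}

/-- Transfinite Cantor–Bendixson iterates. -/
noncomputable def cbIter {α : Type*} [TopologicalSpace α] (K : Set α) (ξ : Ordinal) : Set α :=
  Ordinal.limitRecOn ξ K (fun _ S => cbDeriv S)
    (fun o _ ih => ⋂ (ζ : Ordinal) (h : ζ < o), ih ζ h)


/-- For an infinite `M ⊆ ℕ` with increasing enumeration `(mₙ)`, the family
`ℱ(M⁻¹) = {E : (mₙ)_{n ∈ E} ∈ ℱ}`. -/
def famPre (F : Set (Finset ℕ)) (M : Set ℕ) : Set (Finset ℕ) :=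
  {E : Finset ℕ | E.image (Nat.nth (· ∈ M)) ∈ F}

/-!
Write `K(𝒢) = toCantor '' 𝒢`. The enumeration `n ↦ mₙ` of `M` induces a closed embedding `Φ` of
the Cantor space into itself with `Φ (1_E) = 1_{(mₙ)_{n ∈ E}}`, so `K(ℱ(M⁻¹)) = Φ⁻¹ K(ℱ)` is
compact. Spreading gives `ℱ ⊆ ℱ(M⁻¹)`, while `Φ` maps `K(ℱ(M⁻¹))` into `K(ℱ)`; since
Cantor–Bendixson derivatives are monotone and commute with closed embeddings, the two families
vanish at the same stage.
-/

open Topology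

section CantorBendixson

variable {α β : Type*} [TopologicalSpace α] [TopologicalSpace β]

theorem cbIter_zero (K : Set α) : cbIter K 0 = K :=
  Ordinal.limitRecOn_zero ..

theorem cbIter_add_one (K : Set α) (o : Ordinal) : cbIter K (o + 1) = cbDeriv (cbIter K o) :=
  Ordinal.limitRecOn_add_one ..

theorem cbIter_limit (K : Set α) {o : Ordinal} (h : Order.IsSuccLimit o) :
    cbIter K o = ⋂ (ζ : Ordinal) (_ : ζ < o), cbIter K ζ :=
  Ordinal.limitRecOn_limit _ _ _ _ h

theorem cbDeriv_mono {S T : Set α} (h : S ⊆ T) : cbDeriv S ⊆ cbDeriv T := fun _ hx =>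
  ⟨h hx.1, closure_mono (Set.sdiff_subset_sdiff_left h) hx.2⟩

theorem cbIter_mono {S T : Set α} (h : S ⊆ T) (ξ : Ordinal) : cbIter S ξ ⊆ cbIter T ξ := by
  induction ξ using Ordinal.limitRecOn with
  | zero => rwa [cbIter_zero, cbIter_zero]
  | add_one o ih => rw [cbIter_add_one, cbIter_add_one]; exact cbDeriv_mono ih
  | limit o ho ih => rw [cbIter_limit _ ho, cbIter_limit _ ho]; exact Set.iInter₂_mono ih

theorem cbDeriv_image {e : α → β} (he : IsClosedEmbedding e) (T : Set α) :
    cbDeriv (e '' T) = e '' cbDeriv T := by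
  have hdiff (x : α) : e '' T \ {e x} = e '' (T \ {x}) := by
    rw [Set.image_sdiff he.injective, Set.image_singleton]
  ext y
  constructor
  · rintro ⟨⟨x, hxT, rfl⟩, hy⟩
    rw [hdiff, he.closure_image_eq, he.injective.mem_set_image] at hy
    exact ⟨x, ⟨hxT, hy⟩, rfl⟩
  · rintro ⟨x, ⟨hxT, hx⟩, rfl⟩
    refine ⟨⟨x, hxT, rfl⟩, ?_⟩
    rw [hdiff, he.closure_image_eq]
    exact ⟨x, hx, rfl⟩

theorem cbIter_image {e : α → β} (he : IsClosedEmbedding e) (S : Set α) (ξ : Ordinal) :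
    cbIter (e '' S) ξ = e '' cbIter S ξ := by
  induction ξ using Ordinal.limitRecOn with
  | zero => rw [cbIter_zero, cbIter_zero]
  | add_one o ih => rw [cbIter_add_one, cbIter_add_one, ih, cbDeriv_image he]
  | limit o ho ih =>
      rw [cbIter_limit _ ho, cbIter_limit _ ho, Set.iInter₂_congr ih,
        he.injective.injOn.image_biInter_eq ⟨0, ho.bot_lt⟩]

theorem cbIter_eq_empty_iff_of_isClosedEmbedding {S T : Set α} {e : α → α}
    (he : IsClosedEmbedding e) (hST : S ⊆ T) (hTS : e '' T ⊆ S) (ξ : Ordinal) :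
    cbIter S ξ = ∅ ↔ cbIter T ξ = ∅ := by
  refine ⟨fun hS => ?_, fun hT => Set.subset_empty_iff.1 (hT ▸ cbIter_mono hST ξ)⟩
  have h : e '' cbIter T ξ ⊆ cbIter S ξ := cbIter_image he T ξ ▸ cbIter_mono hTS ξ
  rw [hS] at h
  exact Set.image_eq_empty.1 (Set.subset_empty_iff.1 h)

end CantorBendixson

theorem toCantor_injective : Function.Injective toCantor := fun E E' h =>
  Finset.ext fun n => by simpa [toCantor] using congrFun h n

section Transfer

variable {M : Set ℕ} [DecidablePred (· ∈ M)]

variable (M) in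
/-- Moves the value at `n` to `mₙ`, the `n`-th element of `M`, and puts `false` off `M`. -/
def transferAlong (x : ℕ → Bool) : ℕ → Bool :=
  fun k => decide (k ∈ M) && x (Nat.count (· ∈ M) k)

theorem transferAlong_nth (hM : M.Infinite) (x : ℕ → Bool) (n : ℕ) :
    transferAlong M x (Nat.nth (· ∈ M) n) = x n := by
  simp [transferAlong, Nat.nth_mem_of_infinite (p := (· ∈ M)) hM n,
    Nat.count_nth_of_infinite (p := (· ∈ M)) hM n]

theorem transferAlong_injective (hM : M.Infinite) : Function.Injective (transferAlong M) :=
  fun x y h => funext fun n => by rw [← transferAlong_nth hM x n, ← transferAlong_nth hM y n, h]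

theorem continuous_transferAlong : Continuous (transferAlong M) :=
  continuous_pi fun k =>
    (continuous_of_discreteTopology (f := fun b => decide (k ∈ M) && b)).comp
      (continuous_apply (Nat.count (· ∈ M) k))

theorem isClosedEmbedding_transferAlong (hM : M.Infinite) :
    IsClosedEmbedding (transferAlong M) :=
  continuous_transferAlong.isClosedEmbedding (transferAlong_injective hM)

theorem transferAlong_toCantor (hM : M.Infinite) (E : Finset ℕ) :
    transferAlong M (toCantor E) = toCantor (E.image (Nat.nth (· ∈ M))) := by
  funext k
  by_cases hk : k ∈ M
  · obtain ⟨n, rfl⟩ : ∃ n, Nat.nth (· ∈ M) n = k := ⟨_, Nat.nth_count hk⟩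
    simp [transferAlong, toCantor, hk, Nat.count_nth_of_infinite (p := (· ∈ M)) hM n,
      (Nat.nth_injective (p := (· ∈ M)) hM).eq_iff]
  · have : k ∉ E.image (Nat.nth (· ∈ M)) := by
      rintro hkE
      obtain ⟨n, -, rfl⟩ := Finset.mem_image.1 hkE
      exact hk (Nat.nth_mem_of_infinite hM n)
    simp [transferAlong, toCantor, hk, this]

theorem preimage_transferAlong_image_toCantor (hM : M.Infinite) (F : Set (Finset ℕ)) :
    transferAlong M ⁻¹' (toCantor '' F) = toCantor '' famPre F M := by
  ext x
  constructor
  · rintro ⟨G, hG, hxG⟩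
    set E := G.preimage (Nat.nth (· ∈ M)) (Nat.nth_injective hM).injOn
    have hxE : x = toCantor E := funext fun n => by
      rw [← transferAlong_nth hM x n, ← hxG]
      simp [toCantor, E]
    refine ⟨E, ?_, hxE.symm⟩
    have hEG : E.image (Nat.nth (· ∈ M)) = G :=
      toCantor_injective (by rw [← transferAlong_toCantor hM, ← hxE, hxG])
    show _ ∈ F
    rwa [hEG]
  · rintro ⟨E, hE, rfl⟩
    exact ⟨_, hE, (transferAlong_toCantor hM E).symm⟩

end Transfer

section RegularFamily

variable {F : Set (Finset ℕ)} {M : Set ℕ}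

theorem Hereditary.famPre (hF : Hereditary F) : Hereditary (famPre F M) :=
  fun _ _ hEE' hE' => hF (Finset.image_subset_image hEE') hE'

theorem Spreading.subset_famPre (hF : Spreading F) (hM : M.Infinite) : F ⊆ famPre F M :=
  fun E hE => hF E _ ((Nat.nth_strictMono hM).strictMonoOn _)
    (fun n _ => (Nat.nth_strictMono hM).id_le n) hE

theorem Spreading.famPre (hF : Spreading F) (hM : M.Infinite) : Spreading (famPre F M) := by
  classical
  intro E f hf hfle hE
  set m := Nat.nth (· ∈ M)
  have hm : StrictMono m := Nat.nth_strictMono hM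
  -- conjugate `f` by the enumeration of `M`, so that `F`'s spreading applies to `E.image m`
  set g : ℕ → ℕ := fun k => m (f (Nat.count (· ∈ M) k))
  have hgm : ∀ n, g (m n) = m (f n) := fun n => by
    simp [g, m, Nat.count_nth_of_infinite (p := (· ∈ M)) hM n]
  have hg_mono : StrictMonoOn g ↑(E.image m) := by
    rw [Finset.coe_image]
    rintro _ ⟨k, hk, rfl⟩ _ ⟨l, hl, rfl⟩ hkl
    rw [hgm, hgm]
    exact hm (hf hk hl (hm.lt_iff_lt.1 hkl))
  have hg_le : ∀ n ∈ E.image m, n ≤ g n := by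
    intro n hn
    obtain ⟨k, hk, rfl⟩ := Finset.mem_image.1 hn
    rw [hgm]
    exact hm.monotone (hfle k hk)
  have h := hF (E.image m) g hg_mono hg_le hE
  rwa [Finset.image_image, show g ∘ m = m ∘ f from funext hgm, ← Finset.image_image] at h

theorem isCompact_image_toCantor_famPre (hF : IsCompact (toCantor '' F)) (hM : M.Infinite) :
    IsCompact (toCantor '' famPre F M) := by
  classical
  rw [← preimage_transferAlong_image_toCantor hM]
  exact (hF.isClosed.preimage continuous_transferAlong).isCompact

theorem IsRegularFam.famPre (hF : IsRegularFam F) (hM : M.Infinite) :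
    IsRegularFam (famPre F M) :=
  ⟨isCompact_image_toCantor_famPre hF.1 hM, hF.2.1.famPre, hF.2.2.famPre hM⟩

end RegularFamily

/-- If `ℱ` is regular and `M ⊆ ℕ` is infinite, then `ℱ(M⁻¹)` is regular and has the
same Cantor–Bendixson index as `ℱ`. -/
theorem famPre_regular_CB (F : Set (Finset ℕ)) (hF : IsRegularFam F)
    (M : Set ℕ) (hM : M.Infinite) :
    IsRegularFam (famPre F M) ∧
    ∀ ξ : Ordinal,
      cbIter (toCantor '' F) ξ = ∅ ↔ cbIter (toCantor '' famPre F M) ξ = ∅ := by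
  classical
  have hback : transferAlong M '' (toCantor '' famPre F M) ⊆ toCantor '' F := by
    rw [← preimage_transferAlong_image_toCantor hM]
    exact Set.image_preimage_subset _ _
  exact ⟨hF.famPre hM, cbIter_eq_empty_iff_of_isClosedEmbedding
    (isClosedEmbedding_transferAlong hM) (Set.image_mono (hF.2.2.subset_famPre hM)) hback⟩
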